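/- arXiv:1204.3476 — 6 statements merged into one kernel-verified Lean document; each statement's English description precedes it below -/
import Mathlib

section
/- Let 1 < k₁ ≤ k₂ < ∞ and let (h_ℓ)_{ℓ≥0} be a sequence of positive reals with h₀ ≤ 1 and k₁ ≤ h_{ℓ-1}/h_ℓ ≤ k₂ for all ℓ ≥ 1. Let α, β, γ, c₁, c₂, c₃ > 0 satisfy α ≥ ½·min(β,γ) and β > γ. Then there exists a constant C > 0, depending only on α, β, γ, c₁, c₂, c₃, k₁, k₂ and h₀, such that for every ε with 0 < ε < e^{-1} there exist a level L ∈ ℕ and positive integers N₀, …, N_L with: (i) ∑_{ℓ=0}^{L} c₂ h_ℓ^β / N_ℓ + (c₁ h_L^α)² ≤ ε², and (ii) ∑_{ℓ=0}^{L} N_ℓ · c₃ h_ℓ^{-γ} ≤ C ε^{-2}. -/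
/-!
Take `L` to be the first level whose bias `c₁ h_L^α` is at most `ε / √2`, and `N_ℓ` proportional
to `ε⁻² h_ℓ^((β+γ)/2)`. Then the variance terms `c₂ h_ℓ^β / N_ℓ` and the costs `N_ℓ c₃ h_ℓ^(-γ)`
are both governed by `h_ℓ^((β-γ)/2)`, a geometric series with bounded sum because `β > γ`.
Rounding `N_ℓ` up adds `∑ c₃ h_ℓ^(-γ)`, a geometric series dominated by its last term
`h_L^(-γ)`. By minimality of `L` this term is `O(ε^(-γ/α))`, which is `O(ε⁻²)` since `γ ≤ 2α`.
-/

open Finset Filter Topology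

section GeometricSums

variable {a : ℕ → ℝ} {r : ℝ}

theorem sum_range_succ_le_div_of_le_mul (hr0 : 0 ≤ r) (hr1 : r < 1) (ha0 : 0 ≤ a 0) {n : ℕ}
    (ha : ∀ ℓ < n, a (ℓ + 1) ≤ r * a ℓ) :
    ∑ ℓ ∈ range (n + 1), a ℓ ≤ a 0 / (1 - r) :=
  calc ∑ ℓ ∈ range (n + 1), a ℓ ≤ ∑ ℓ ∈ range (n + 1), r ^ ℓ * a 0 :=
        sum_le_sum fun ℓ hℓ => le_geom hr0 ℓ fun j hj => ha j (by simp at hℓ; omega)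
    _ = (∑ ℓ ∈ range (n + 1), r ^ ℓ) * a 0 := (sum_mul ..).symm
    _ ≤ 1 / (1 - r) * a 0 := by
        gcongr
        rw [range_eq_Ico]
        simpa using geom_sum_Ico_le_of_lt_one (m := 0) (n := n + 1) hr0 hr1
    _ = a 0 / (1 - r) := by ring

theorem sum_range_succ_le_div_of_le_mul_succ (hr0 : 0 ≤ r) (hr1 : r < 1) {n : ℕ} (han : 0 ≤ a n)
    (ha : ∀ ℓ < n, a ℓ ≤ r * a (ℓ + 1)) :
    ∑ ℓ ∈ range (n + 1), a ℓ ≤ a n / (1 - r) := by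
  rw [← sum_range_reflect]
  refine sum_range_succ_le_div_of_le_mul (a := fun j => a (n - j)) hr0 hr1 (by simpa) ?_
  intro j hj
  simpa [show n - j = n - (j + 1) + 1 by omega] using ha (n - (j + 1)) (by omega)

end GeometricSums

theorem rpow_le_rpow_neg_mul_rpow_of_mul_le {x y k s : ℝ} (hx : 0 ≤ x) (hk : 0 < k) (hs : 0 ≤ s)
    (hxy : k * x ≤ y) : x ^ s ≤ k ^ (-s) * y ^ s :=
  calc x ^ s = k ^ (-s) * (k * x) ^ s := by
        rw [Real.mul_rpow hk.le hx, ← mul_assoc, ← Real.rpow_add hk, neg_add_cancel,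
          Real.rpow_zero, one_mul]
    _ ≤ k ^ (-s) * y ^ s := by gcongr

theorem rpow_neg_le_rpow_neg_mul_rpow_neg_of_mul_le {x y k g : ℝ} (hx : 0 < x) (hk : 0 < k)
    (hg : 0 ≤ g) (hxy : k * x ≤ y) : y ^ (-g) ≤ k ^ (-g) * x ^ (-g) :=
  calc y ^ (-g) ≤ (k * x) ^ (-g) := Real.rpow_le_rpow_of_nonpos (by positivity) hxy (by linarith)
    _ = k ^ (-g) * x ^ (-g) := Real.mul_rpow hk.le hx.le

theorem rpow_neg_le_of_lt_mul_rpow {x y c a g : ℝ} (hx : 0 < x) (hy : 0 < y) (hc : 0 < c)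
    (ha : 0 < a) (hg : 0 ≤ g) (hxy : x < c * y ^ a) : y ^ (-g) ≤ c ^ (g / a) * x ^ (-(g / a)) :=
  calc y ^ (-g) = (y ^ a) ^ (-(g / a)) := by
        rw [← Real.rpow_mul hy.le]; congr 1; field_simp
    _ ≤ (x / c) ^ (-(g / a)) :=
        Real.rpow_le_rpow_of_nonpos (div_pos hx hc) ((div_lt_iff₀' hc).2 hxy).le
          (neg_nonpos.2 (div_nonneg hg ha.le))
    _ = c ^ (g / a) * x ^ (-(g / a)) := by
        rw [Real.div_rpow hx.le hc.le, Real.rpow_neg hc.le (g / a), div_inv_eq_mul, mul_comm]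

section GeometricLevels

variable {h : ℕ → ℝ} {k : ℝ}

theorem tendsto_rpow_atTop_nhds_zero_of_mul_le {s : ℝ} (hk : 1 < k) (hs : 0 < s)
    (hnonneg : ∀ ℓ, 0 ≤ h ℓ) (hstep : ∀ ℓ, k * h (ℓ + 1) ≤ h ℓ) :
    Tendsto (fun n => h n ^ s) atTop (𝓝 0) := by
  have hr : k ^ (-s) < 1 := Real.rpow_lt_one_of_one_lt_of_neg hk (by linarith)
  refine squeeze_zero (fun n => Real.rpow_nonneg (hnonneg n) s)
    (fun n => le_geom (u := fun n => h n ^ s) (by positivity) n fun ℓ _ =>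
      rpow_le_rpow_neg_mul_rpow_of_mul_le (hnonneg _) (by linarith) hs.le (hstep ℓ)) ?_
  simpa using (tendsto_pow_atTop_nhds_zero_of_lt_one (by positivity) hr).mul_const (h 0 ^ s)

theorem sum_range_succ_rpow_le_of_mul_le {s : ℝ} (hk : 1 < k) (hs : 0 < s)
    (hnonneg : ∀ ℓ, 0 ≤ h ℓ) (hstep : ∀ ℓ, k * h (ℓ + 1) ≤ h ℓ) (n : ℕ) :
    ∑ ℓ ∈ range (n + 1), h ℓ ^ s ≤ h 0 ^ s / (1 - k ^ (-s)) :=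
  sum_range_succ_le_div_of_le_mul (by positivity)
    (Real.rpow_lt_one_of_one_lt_of_neg hk (by linarith)) (Real.rpow_nonneg (hnonneg 0) s)
    fun ℓ _ => rpow_le_rpow_neg_mul_rpow_of_mul_le (hnonneg _) (by linarith) hs.le (hstep ℓ)

theorem sum_range_succ_rpow_neg_le_of_mul_le {g : ℝ} (hk : 1 < k) (hg : 0 < g)
    (hpos : ∀ ℓ, 0 < h ℓ) (hstep : ∀ ℓ, k * h (ℓ + 1) ≤ h ℓ) (n : ℕ) :
    ∑ ℓ ∈ range (n + 1), h ℓ ^ (-g) ≤ h n ^ (-g) / (1 - k ^ (-g)) :=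
  sum_range_succ_le_div_of_le_mul_succ (by positivity)
    (Real.rpow_lt_one_of_one_lt_of_neg hk (by linarith)) (Real.rpow_nonneg (hpos n).le _)
    fun ℓ _ => rpow_neg_le_rpow_neg_mul_rpow_neg_of_mul_le (hpos _) (by linarith) hg.le (hstep ℓ)

end GeometricLevels

theorem exists_level_mul_rpow_le_and_rpow_neg_le {h : ℕ → ℝ} {k K α γ c ε : ℝ} (hk : 1 < k)
    (hpos : ∀ ℓ, 0 < h ℓ) (hstep : ∀ ℓ, k * h (ℓ + 1) ≤ h ℓ) (hK : ∀ ℓ, h ℓ ≤ K * h (ℓ + 1))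
    (hα : 0 < α) (hγ : 0 ≤ γ) (hγα : γ ≤ 2 * α) (hc : 0 < c) (hε : 0 < ε) (hε1 : ε ≤ 1) :
    ∃ L, c * h L ^ α ≤ ε ∧
      h L ^ (-γ) ≤ max (h 0 ^ (-γ)) (K ^ γ * c ^ (γ / α)) * ε ^ (-2 : ℝ) := by
  have hex : ∃ L, c * h L ^ α ≤ ε := by
    have hlim := (tendsto_rpow_atTop_nhds_zero_of_mul_le hk hα (fun ℓ => (hpos ℓ).le)
      hstep).const_mul c
    rw [mul_zero] at hlim
    exact (hlim.eventually (ge_mem_nhds hε)).exists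
  have hK0 : 0 < K := pos_of_mul_pos_left ((hpos 0).trans_le (hK 0)) (hpos 1).le
  have hε2 : 1 ≤ ε ^ (-2 : ℝ) := Real.one_le_rpow_of_pos_of_le_one_of_nonpos hε hε1 (by norm_num)
  refine ⟨Nat.find hex, Nat.find_spec hex, ?_⟩
  rcases hL : Nat.find hex with _ | M
  · exact (le_max_left _ _).trans (le_mul_of_one_le_right (by positivity) hε2)
  · have hM : ε < c * h M ^ α := lt_of_not_ge (Nat.find_min hex (hL ▸ M.lt_succ_self))
    calc h (M + 1) ^ (-γ) ≤ K⁻¹ ^ (-γ) * h M ^ (-γ) :=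
          rpow_neg_le_rpow_neg_mul_rpow_neg_of_mul_le (hpos M) (inv_pos.2 hK0) hγ
            ((inv_mul_le_iff₀ hK0).2 (hK M))
      _ = K ^ γ * h M ^ (-γ) := by
          rw [Real.inv_rpow hK0.le, Real.rpow_neg hK0.le, inv_inv]
      _ ≤ K ^ γ * (c ^ (γ / α) * ε ^ (-(γ / α))) := by
          gcongr; exact rpow_neg_le_of_lt_mul_rpow hε (hpos M) hc hα hγ hM
      _ ≤ K ^ γ * (c ^ (γ / α) * ε ^ (-2 : ℝ)) := by
          refine mul_le_mul_of_nonneg_left (mul_le_mul_of_nonneg_left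
            (Real.rpow_le_rpow_of_exponent_ge hε hε1 (neg_le_neg ?_)) (by positivity))
            (by positivity)
          rw [div_le_iff₀ hα]; linarith
      _ ≤ max (h 0 ^ (-γ)) (K ^ γ * c ^ (γ / α)) * ε ^ (-2 : ℝ) := by
          rw [← mul_assoc]; gcongr; exact le_max_right _ _

section Samples

variable (v s : ℕ → ℝ) (L : ℕ) (ε : ℝ)

/-- For level variances `v` and costs `w`, the choice `s = √(v / w)` minimises the total cost at a
given sampling variance. -/
noncomputable def mlmcSamples (ℓ : ℕ) : ℕ :=
  ⌈2 * (∑ j ∈ range (L + 1), v j / s j) * s ℓ / ε ^ 2⌉₊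

variable {v s L ε}

theorem mlmcSamples_pos (hv : ∀ ℓ, 0 < v ℓ) (hs : ∀ ℓ, 0 < s ℓ) (hε : ε ≠ 0) (ℓ : ℕ) :
    0 < mlmcSamples v s L ε ℓ := by
  have hS := sum_pos (fun j _ => div_pos (hv j) (hs j)) (nonempty_range_add_one (n := L))
  exact Nat.ceil_pos.2 (by have := hs ℓ; positivity)

theorem sum_div_mlmcSamples_le (hv : ∀ ℓ, 0 < v ℓ) (hs : ∀ ℓ, 0 < s ℓ) (hε : ε ≠ 0) :
    ∑ ℓ ∈ range (L + 1), v ℓ / mlmcSamples v s L ε ℓ ≤ ε ^ 2 / 2 := by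
  set S := ∑ j ∈ range (L + 1), v j / s j
  have hS : 0 < S := sum_pos (fun j _ => div_pos (hv j) (hs j)) nonempty_range_add_one
  calc ∑ ℓ ∈ range (L + 1), v ℓ / mlmcSamples v s L ε ℓ
      ≤ ∑ ℓ ∈ range (L + 1), ε ^ 2 / (2 * S) * (v ℓ / s ℓ) := by
        refine sum_le_sum fun ℓ _ => ?_
        have := hs ℓ
        calc v ℓ / mlmcSamples v s L ε ℓ ≤ v ℓ / (2 * S * s ℓ / ε ^ 2) :=
              div_le_div_of_nonneg_left (hv ℓ).le (by positivity) (Nat.le_ceil _)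
          _ = ε ^ 2 / (2 * S) * (v ℓ / s ℓ) := by field_simp
    _ = ε ^ 2 / (2 * S) * S := (mul_sum ..).symm
    _ = ε ^ 2 / 2 := by field_simp

theorem sum_mlmcSamples_mul_le {w : ℕ → ℝ} (hv : ∀ ℓ, 0 ≤ v ℓ) (hs : ∀ ℓ, 0 ≤ s ℓ)
    (hw : ∀ ℓ, 0 ≤ w ℓ) :
    ∑ ℓ ∈ range (L + 1), (mlmcSamples v s L ε ℓ : ℝ) * w ℓ ≤
      2 * (∑ ℓ ∈ range (L + 1), v ℓ / s ℓ) * (∑ ℓ ∈ range (L + 1), s ℓ * w ℓ) / ε ^ 2 +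
        ∑ ℓ ∈ range (L + 1), w ℓ := by
  set S := ∑ j ∈ range (L + 1), v j / s j
  have hS : 0 ≤ S := sum_nonneg fun j _ => div_nonneg (hv j) (hs j)
  calc ∑ ℓ ∈ range (L + 1), (mlmcSamples v s L ε ℓ : ℝ) * w ℓ
      ≤ ∑ ℓ ∈ range (L + 1), (2 * S / ε ^ 2 * (s ℓ * w ℓ) + w ℓ) := by
        refine sum_le_sum fun ℓ _ => ?_
        have := hs ℓ
        calc (mlmcSamples v s L ε ℓ : ℝ) * w ℓ ≤ (2 * S * s ℓ / ε ^ 2 + 1) * w ℓ :=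
              mul_le_mul_of_nonneg_right (Nat.ceil_lt_add_one (by positivity)).le (hw ℓ)
          _ = 2 * S / ε ^ 2 * (s ℓ * w ℓ) + w ℓ := by ring
    _ = 2 * S * (∑ ℓ ∈ range (L + 1), s ℓ * w ℓ) / ε ^ 2 + ∑ ℓ ∈ range (L + 1), w ℓ := by
        rw [sum_add_distrib, ← mul_sum]; ring

end Samples

theorem sum_mlmcSamples_mul_rpow_neg_le {h : ℕ → ℝ} {k β γ c₂ c₃ ε : ℝ} (hk : 1 < k)
    (hpos : ∀ ℓ, 0 < h ℓ) (hstep : ∀ ℓ, k * h (ℓ + 1) ≤ h ℓ) (hγ : 0 < γ) (hβγ : γ < β)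
    (hc₂ : 0 ≤ c₂) (hc₃ : 0 ≤ c₃) (L : ℕ) :
    ∑ ℓ ∈ range (L + 1), (mlmcSamples (fun ℓ => c₂ * h ℓ ^ β) (fun ℓ => h ℓ ^ ((β + γ) / 2))
        L ε ℓ : ℝ) * (c₃ * h ℓ ^ (-γ)) ≤
      2 * c₂ * c₃ * (h 0 ^ ((β - γ) / 2) / (1 - k ^ (-((β - γ) / 2)))) ^ 2 / ε ^ 2 +
        c₃ * (h L ^ (-γ) / (1 - k ^ (-γ))) := by
  have hvs : ∀ ℓ, c₂ * h ℓ ^ β / h ℓ ^ ((β + γ) / 2) = c₂ * h ℓ ^ ((β - γ) / 2) := fun ℓ => by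
    rw [mul_div_assoc, ← Real.rpow_sub (hpos ℓ)]; ring_nf
  have hsw : ∀ ℓ, h ℓ ^ ((β + γ) / 2) * (c₃ * h ℓ ^ (-γ)) = c₃ * h ℓ ^ ((β - γ) / 2) :=
    fun ℓ => by rw [mul_left_comm, ← Real.rpow_add (hpos ℓ)]; ring_nf
  have hnonneg : ∀ ℓ, 0 ≤ h ℓ := fun ℓ => (hpos ℓ).le
  calc _ ≤ 2 * (∑ ℓ ∈ range (L + 1), c₂ * h ℓ ^ β / h ℓ ^ ((β + γ) / 2)) *
          (∑ ℓ ∈ range (L + 1), h ℓ ^ ((β + γ) / 2) * (c₃ * h ℓ ^ (-γ))) / ε ^ 2 +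
          ∑ ℓ ∈ range (L + 1), c₃ * h ℓ ^ (-γ) :=
        sum_mlmcSamples_mul_le (fun ℓ => by have := hnonneg ℓ; positivity)
          (fun ℓ => by have := hnonneg ℓ; positivity) (fun ℓ => by have := hnonneg ℓ; positivity)
    _ = 2 * c₂ * c₃ * (∑ ℓ ∈ range (L + 1), h ℓ ^ ((β - γ) / 2)) ^ 2 / ε ^ 2 +
          c₃ * ∑ ℓ ∈ range (L + 1), h ℓ ^ (-γ) := by
        simp only [hvs, hsw, ← mul_sum]; ring
    _ ≤ _ := by
        gcongr
        · exact sum_nonneg fun ℓ _ => Real.rpow_nonneg (hnonneg ℓ) _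
        · exact sum_range_succ_rpow_le_of_mul_le hk (by linarith) hnonneg hstep L
        · exact sum_range_succ_rpow_neg_le_of_mul_le hk hγ hpos hstep L

theorem mlmc_complexity_beta_gt_gamma_general
    (k₁ k₂ : ℝ) (hk₁ : 1 < k₁)
    (h : ℕ → ℝ) (hpos : ∀ ℓ, 0 < h ℓ)
    (hlow : ∀ ℓ : ℕ, k₁ ≤ h ℓ / h (ℓ + 1))
    (hhigh : ∀ ℓ : ℕ, h ℓ / h (ℓ + 1) ≤ k₂)
    (α β γ c₁ c₂ c₃ : ℝ)
    (hα : 0 < α) (hγ : 0 < γ)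
    (hc₁ : 0 < c₁) (hc₂ : 0 < c₂) (hc₃ : 0 < c₃)
    (hαβγ : α ≥ (1 / 2) * min β γ) (hβγ : β > γ) :
    ∃ C : ℝ, 0 < C ∧ ∀ ε : ℝ, 0 < ε → ε < Real.exp (-1) →
      ∃ (L : ℕ) (N : ℕ → ℕ), (∀ ℓ ≤ L, 0 < N ℓ) ∧
        (∑ ℓ ∈ Finset.range (L + 1), c₂ * h ℓ ^ β / (N ℓ : ℝ)) + (c₁ * h L ^ α) ^ 2 ≤ ε ^ 2 ∧
        (∑ ℓ ∈ Finset.range (L + 1), (N ℓ : ℝ) * (c₃ * h ℓ ^ (-γ))) ≤ C * ε ^ (-2 : ℝ) := by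
  have hstep : ∀ ℓ, k₁ * h (ℓ + 1) ≤ h ℓ := fun ℓ => (le_div_iff₀ (hpos _)).1 (hlow ℓ)
  have hK : ∀ ℓ, h ℓ ≤ k₂ * h (ℓ + 1) := fun ℓ => (div_le_iff₀ (hpos _)).1 (hhigh ℓ)
  have hγα : γ ≤ 2 * α := by rw [min_eq_right hβγ.le] at hαβγ; linarith
  have hqγ : 0 < 1 - k₁ ^ (-γ) := sub_pos.2 (Real.rpow_lt_one_of_one_lt_of_neg hk₁ (by linarith))
  set G := h 0 ^ ((β - γ) / 2) / (1 - k₁ ^ (-((β - γ) / 2)))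
  set H := max (h 0 ^ (-γ)) (k₂ ^ γ * (√2 * c₁) ^ (γ / α))
  have hH : 0 < H := lt_max_of_lt_left (Real.rpow_pos_of_pos (hpos 0) _)
  refine ⟨2 * c₂ * c₃ * G ^ 2 + c₃ * H / (1 - k₁ ^ (-γ)),
    add_pos_of_nonneg_of_pos (by positivity) (div_pos (mul_pos hc₃ hH) hqγ),
    fun ε hε hεe => ?_⟩
  have hε1 : ε ≤ 1 := (hεe.trans (Real.exp_lt_one_iff.2 (by norm_num))).le
  obtain ⟨L, hbias, hfine⟩ := exists_level_mul_rpow_le_and_rpow_neg_le (c := √2 * c₁) hk₁ hpos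
    hstep hK hα hγ.le hγα (by positivity) hε hε1
  have hv : ∀ ℓ, 0 < c₂ * h ℓ ^ β := fun ℓ => by have := hpos ℓ; positivity
  have hs : ∀ ℓ, 0 < h ℓ ^ ((β + γ) / 2) := fun ℓ => Real.rpow_pos_of_pos (hpos ℓ) _
  refine ⟨L, mlmcSamples _ _ L ε, fun ℓ _ => mlmcSamples_pos hv hs hε.ne' ℓ, ?_, ?_⟩
  · have hbias2 : (√2 * (c₁ * h L ^ α)) ^ 2 ≤ ε ^ 2 :=
      pow_le_pow_left₀ (by have := hpos L; positivity) (by rwa [← mul_assoc]) 2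
    rw [mul_pow, Real.sq_sqrt zero_le_two] at hbias2
    linarith [sum_div_mlmcSamples_le hv hs hε.ne' (L := L)]
  · calc _ ≤ 2 * c₂ * c₃ * G ^ 2 / ε ^ 2 + c₃ * (h L ^ (-γ) / (1 - k₁ ^ (-γ))) :=
          sum_mlmcSamples_mul_rpow_neg_le hk₁ hpos hstep hγ hβγ hc₂.le hc₃.le L
      _ ≤ 2 * c₂ * c₃ * G ^ 2 / ε ^ 2 + c₃ * (H * ε ^ (-2 : ℝ) / (1 - k₁ ^ (-γ))) := by
          gcongr
      _ = _ := by rw [Real.rpow_neg hε.le, Real.rpow_two]; ring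

/-- Abstract multilevel Monte Carlo complexity theorem, case β > γ. -/
theorem mlmc_complexity_beta_gt_gamma
    (k₁ k₂ : ℝ) (hk₁ : 1 < k₁) (hk₁₂ : k₁ ≤ k₂)
    (h : ℕ → ℝ) (hpos : ∀ ℓ, 0 < h ℓ) (hh0 : h 0 ≤ 1)
    (hlow : ∀ ℓ : ℕ, k₁ ≤ h ℓ / h (ℓ + 1))
    (hhigh : ∀ ℓ : ℕ, h ℓ / h (ℓ + 1) ≤ k₂)
    (α β γ c₁ c₂ c₃ : ℝ)
    (hα : 0 < α) (hβ : 0 < β) (hγ : 0 < γ)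
    (hc₁ : 0 < c₁) (hc₂ : 0 < c₂) (hc₃ : 0 < c₃)
    (hαβγ : α ≥ (1 / 2) * min β γ) (hβγ : β > γ) :
    ∃ C : ℝ, 0 < C ∧ ∀ ε : ℝ, 0 < ε → ε < Real.exp (-1) →
      ∃ (L : ℕ) (N : ℕ → ℕ), (∀ ℓ ≤ L, 0 < N ℓ) ∧
        (∑ ℓ ∈ Finset.range (L + 1), c₂ * h ℓ ^ β / (N ℓ : ℝ)) + (c₁ * h L ^ α) ^ 2 ≤ ε ^ 2 ∧
        (∑ ℓ ∈ Finset.range (L + 1), (N ℓ : ℝ) * (c₃ * h ℓ ^ (-γ))) ≤ C * ε ^ (-2 : ℝ) :=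
  mlmc_complexity_beta_gt_gamma_general k₁ k₂ hk₁ h hpos hlow hhigh α β γ c₁ c₂ c₃ hα hγ hc₁ hc₂ hc₃
    hαβγ hβγ
end

section
/- Let 1 < k₁ ≤ k₂ < ∞ and let (h_ℓ)_{ℓ≥0} be a sequence of positive reals with h₀ ≤ 1 and k₁ ≤ h_{ℓ-1}/h_ℓ ≤ k₂ for all ℓ ≥ 1. Let α, β, γ, c₁, c₂, c₃ > 0 satisfy α ≥ ½·min(β,γ) and β = γ. Then there exists a constant C > 0, depending only on α, β, γ, c₁, c₂, c₃, k₁, k₂ and h₀, such that for every ε with 0 < ε < e^{-1} there exist a level L ∈ ℕ and positive integers N₀, …, N_L with: (i) ∑_{ℓ=0}^{L} c₂ h_ℓ^β / N_ℓ + (c₁ h_L^α)² ≤ ε², and (ii) ∑_{ℓ=0}^{L} N_ℓ · c₃ h_ℓ^{-γ} ≤ C ε^{-2} (log ε)². -/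
/-!
Take for `L` the first level with `h L ≤ δ := (ε / (√2 c₁)) ^ (1/α)`, so the squared bias is at
most `ε² / 2`. The decay `h ℓ ≤ k₁ ^ (-ℓ) h 0` makes `L = O(|log ε|)`, and minimality together with
`h (L-1) / h L ≤ k₂` gives `h L > δ / k₂`, hence `h L ^ (-β) = O(ε ^ (-β/α)) = O(ε⁻²)` as `β ≤ 2α`.
With `N ℓ = ⌈2 (L+1) c₂ h ℓ ^ β / ε²⌉` every level contributes at most `ε² / (2 (L+1))` to the
variance, and since `β = γ` the cost of level `ℓ` is at most `2 (L+1) c₂ c₃ / ε² + c₃ h L ^ (-β)`;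
summing over the `L + 1 = O(|log ε|)` levels gives `O(ε⁻² log² ε)`.
-/

open Real Finset

section MeshSequence

variable {h : ℕ → ℝ} {k : ℝ}

theorem pow_mul_le_of_le_div (hpos : ∀ ℓ, 0 < h ℓ) (hk : 0 ≤ k)
    (hlow : ∀ ℓ, k ≤ h ℓ / h (ℓ + 1)) (ℓ : ℕ) : k ^ ℓ * h ℓ ≤ h 0 := by
  induction ℓ with
  | zero => simp
  | succ n ih =>
    have hstep : k * h (n + 1) ≤ h n := (le_div_iff₀ (hpos (n + 1))).1 (hlow n)
    calc k ^ (n + 1) * h (n + 1) = k ^ n * (k * h (n + 1)) := by ring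
      _ ≤ k ^ n * h n := by gcongr
      _ ≤ h 0 := ih

theorem exists_first_index_le (hpos : ∀ ℓ, 0 < h ℓ) (hk : 1 < k)
    (hlow : ∀ ℓ, k ≤ h ℓ / h (ℓ + 1)) {δ : ℝ} (hδ : 0 < δ) :
    ∃ L, h L ≤ δ ∧ ∀ m < L, δ < h m := by
  classical
  have hex : ∃ n, h n ≤ δ := by
    obtain ⟨n, hn⟩ := exists_pow_lt_of_lt_one (div_pos hδ (hpos 0)) (inv_lt_one_of_one_lt₀ hk)
    have hdecay := pow_mul_le_of_le_div hpos (by positivity) hlow n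
    rw [inv_pow, inv_lt_iff_one_lt_mul₀ (by positivity)] at hn
    refine ⟨n, le_of_lt ?_⟩
    calc h n < h n * (δ / h 0 * k ^ n) := lt_mul_of_one_lt_right (hpos n) hn
      _ = δ / h 0 * (k ^ n * h n) := by ring
      _ ≤ δ / h 0 * h 0 := by have := hpos 0; gcongr
      _ = δ := div_mul_cancel₀ δ (hpos 0).ne'
  exact ⟨Nat.find hex, Nat.find_spec hex, fun m hm => not_le.1 (Nat.find_min hex hm)⟩

theorem natCast_mul_log_lt_log_div (hpos : ∀ ℓ, 0 < h ℓ) (hk : 0 < k)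
    (hlow : ∀ ℓ, k ≤ h ℓ / h (ℓ + 1)) {δ : ℝ} (hδ : 0 < δ) {m : ℕ} (hm : δ < h m) :
    m * log k < log (h 0 / δ) := by
  rw [← log_pow]
  refine log_lt_log (by positivity) ((lt_div_iff₀ hδ).2 ?_)
  calc k ^ m * δ < k ^ m * h m := by gcongr
    _ ≤ h 0 := pow_mul_le_of_le_div hpos hk.le hlow m

theorem rpow_neg_succ_le (hpos : ∀ ℓ, 0 < h ℓ) {m : ℕ} (hhigh : h m / h (m + 1) ≤ k)
    {δ : ℝ} (hδ : 0 < δ) (hm : δ < h m) {β : ℝ} (hβ : 0 ≤ β) :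
    h (m + 1) ^ (-β) ≤ k ^ β * δ ^ (-β) := by
  have hk : 0 ≤ k := (div_nonneg (hpos m).le (hpos (m + 1)).le).trans hhigh
  have hstep : h m ≤ k * h (m + 1) := (div_le_iff₀ (hpos (m + 1))).1 hhigh
  rw [rpow_neg (hpos _).le, rpow_neg hδ.le, ← inv_rpow (hpos _).le,
    ← inv_rpow hδ.le, ← mul_rpow hk (inv_nonneg.2 hδ.le)]
  refine rpow_le_rpow (inv_pos.2 (hpos _)).le ?_ hβ
  rw [inv_le_iff_one_le_mul₀ (hpos _), ← div_eq_mul_inv, mul_comm, ← mul_div_assoc,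
    one_le_div hδ]
  linarith

end MeshSequence

section Accuracy

variable {α β ε : ℝ}

theorem sq_mul_rpow_le_half_sq {c : ℝ} (hα : 0 < α) (hc : 0 < c) (hε : 0 ≤ ε) {x : ℝ} (hx : 0 ≤ x)
    (hxε : x ≤ (ε / (√2 * c)) ^ α⁻¹) : (c * x ^ α) ^ 2 ≤ ε ^ 2 / 2 := by
  have hxα : x ^ α ≤ ε / (√2 * c) :=
    (le_rpow_inv_iff_of_pos hx (by positivity) hα).1 hxε
  calc (c * x ^ α) ^ 2 ≤ (c * (ε / (√2 * c))) ^ 2 := by gcongr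
    _ = ε ^ 2 / 2 := by field_simp; rw [sq_sqrt zero_le_two]

theorem rpow_inv_rpow_neg_le {s : ℝ} (hα : 0 < α) (hε : 0 < ε) (hε1 : ε ≤ 1) (hs : 0 < s)
    (hβα : β ≤ 2 * α) : ((ε / s) ^ α⁻¹) ^ (-β) ≤ s ^ (β / α) / ε ^ 2 := by
  have hexp : ε ^ (2 : ℝ) ≤ ε ^ (β / α) :=
    rpow_le_rpow_of_exponent_ge hε hε1 ((div_le_iff₀ hα).2 hβα)
  rw [← rpow_mul (by positivity), div_rpow hε.le hs.le, ← rpow_two]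
  calc (ε ^ (α⁻¹ * -β)) / s ^ (α⁻¹ * -β) = s ^ (β / α) / ε ^ (β / α) := by
        rw [show α⁻¹ * -β = -(β / α) by ring, rpow_neg hε.le, rpow_neg hs.le]
        field_simp
    _ ≤ s ^ (β / α) / ε ^ (2 : ℝ) := by gcongr

end Accuracy

section Level

variable {h : ℕ → ℝ} {k α β ε s : ℝ} {L : ℕ}

theorem natCast_add_one_le_mul_neg_log (hpos : ∀ ℓ, 0 < h ℓ) (hk : 1 < k)
    (hlow : ∀ ℓ, k ≤ h ℓ / h (ℓ + 1)) (hα : 0 < α) (hs : 0 < s) (hε : 0 < ε)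
    (hεe : ε ≤ exp (-1)) (hL : ∀ m < L, (ε / s) ^ α⁻¹ < h m) :
    (L + 1 : ℝ) ≤ (2 + (|log (h 0) + α⁻¹ * log s| + α⁻¹) / log k) * -log ε := by
  set b := log (h 0) + α⁻¹ * log s
  have hlogk : 0 < log k := log_pos hk
  have ht : 1 ≤ -log ε := by
    have := log_le_log hε hεe
    rw [log_exp] at this
    linarith
  have hslope : 0 ≤ (|b| + α⁻¹) / log k := by positivity
  cases L with
  | zero => push_cast; nlinarith
  | succ m =>
    have hm := natCast_mul_log_lt_log_div hpos (by linarith) hlow (by positivity)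
      (hL m m.lt_succ_self)
    rw [log_div (hpos 0).ne' (by positivity), log_rpow (by positivity),
      log_div hε.ne' hs.ne'] at hm
    have hm' : (m : ℝ) ≤ (|b| + α⁻¹) / log k * -log ε := by
      rw [div_mul_eq_mul_div, le_div_iff₀ hlogk]
      nlinarith [le_abs_self b, mul_nonneg (abs_nonneg b) (sub_nonneg.2 ht)]
    push_cast
    nlinarith

theorem rpow_neg_le_max_div_sq (hpos : ∀ ℓ, 0 < h ℓ) (hhigh : ∀ ℓ, h ℓ / h (ℓ + 1) ≤ k)
    (hα : 0 < α) (hβ : 0 ≤ β) (hβα : β ≤ 2 * α) (hs : 0 < s) (hε : 0 < ε) (hε1 : ε ≤ 1)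
    (hL : ∀ m < L, (ε / s) ^ α⁻¹ < h m) :
    h L ^ (-β) ≤ max (h 0 ^ (-β)) (k ^ β * s ^ (β / α)) / ε ^ 2 := by
  have hε2 : 0 < ε ^ 2 := by positivity
  cases L with
  | zero =>
    exact (le_max_left _ _).trans
      (le_div_self (le_max_of_le_left (rpow_pos_of_pos (hpos 0) _).le) hε2 (pow_le_one₀ hε.le hε1))
  | succ m =>
    have hk : 0 ≤ k := (div_nonneg (hpos 0).le (hpos 1).le).trans (hhigh 0)
    calc h (m + 1) ^ (-β) ≤ k ^ β * ((ε / s) ^ α⁻¹) ^ (-β) :=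
          rpow_neg_succ_le hpos (hhigh m) (by positivity) (hL m m.lt_succ_self) hβ
      _ ≤ k ^ β * (s ^ (β / α) / ε ^ 2) := by
          gcongr
          exact rpow_inv_rpow_neg_le hα hε hε1 hs hβα
      _ ≤ max (h 0 ^ (-β)) (k ^ β * s ^ (β / α)) / ε ^ 2 := by
          rw [← mul_div_assoc]
          gcongr
          exact le_max_right _ _

end Level

theorem exists_mlmc_level {h : ℕ → ℝ} {k₁ k₂ α β c : ℝ} (hpos : ∀ ℓ, 0 < h ℓ) (hk₁ : 1 < k₁)
    (hlow : ∀ ℓ, k₁ ≤ h ℓ / h (ℓ + 1)) (hhigh : ∀ ℓ, h ℓ / h (ℓ + 1) ≤ k₂)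
    (hα : 0 < α) (hβ : 0 ≤ β) (hβα : β ≤ 2 * α) (hc : 0 < c) :
    ∃ A E : ℝ, 0 < A ∧ 0 < E ∧ ∀ ε, 0 < ε → ε < exp (-1) → ∃ L : ℕ,
      (c * h L ^ α) ^ 2 ≤ ε ^ 2 / 2 ∧ (L + 1 : ℝ) ≤ A * -log ε ∧
        ∀ ℓ ≤ L, h ℓ ^ (-β) ≤ E / ε ^ 2 := by
  set s := √2 * c
  have hs : 0 < s := by positivity
  refine ⟨2 + (|log (h 0) + α⁻¹ * log s| + α⁻¹) / log k₁, max (h 0 ^ (-β)) (k₂ ^ β * s ^ (β / α)),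
    by have := log_pos hk₁; positivity, lt_max_of_lt_left (rpow_pos_of_pos (hpos 0) _),
    fun ε hε hεe => ?_⟩
  have hε1 : ε ≤ 1 := hεe.le.trans (exp_le_one_iff.2 (by norm_num))
  obtain ⟨L, hLδ, hL⟩ := exists_first_index_le hpos hk₁ hlow (δ := (ε / s) ^ α⁻¹) (by positivity)
  have hanti : Antitone h :=
    antitone_nat_of_succ_le fun ℓ => (one_le_div (hpos _)).1 (hk₁.le.trans (hlow ℓ))
  refine ⟨L, sq_mul_rpow_le_half_sq hα hc hε.le (hpos L).le hLδ,
    natCast_add_one_le_mul_neg_log hpos hk₁ hlow hα hs hε hεe.le hL, fun ℓ hℓ => ?_⟩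
  exact (rpow_le_rpow_of_nonpos (hpos L) (hanti hℓ) (neg_nonpos.2 hβ)).trans
    (rpow_neg_le_max_div_sq hpos hhigh hα hβ hβα hs hε hε1 hL)

theorem exists_mlmc_samples {n : ℕ} (hn : 0 < n) {v w : ℕ → ℝ} {κ W ε : ℝ} (hv : ∀ ℓ, 0 < v ℓ)
    (hw : ∀ ℓ, 0 ≤ w ℓ) (hvw : ∀ ℓ, v ℓ * w ℓ = κ) (hW : ∀ ℓ < n, w ℓ ≤ W) (hε : 0 < ε) :
    ∃ N : ℕ → ℕ, (∀ ℓ, 0 < N ℓ) ∧ ∑ ℓ ∈ range n, v ℓ / N ℓ ≤ ε ^ 2 / 2 ∧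
      ∑ ℓ ∈ range n, N ℓ * w ℓ ≤ n * (2 * n * κ / ε ^ 2 + W) := by
  have hn' : (0 : ℝ) < n := Nat.cast_pos.2 hn
  have hN : ∀ ℓ, 0 < 2 * n * v ℓ / ε ^ 2 := fun ℓ => by have := hv ℓ; positivity
  refine ⟨fun ℓ => ⌈2 * n * v ℓ / ε ^ 2⌉₊, fun ℓ => Nat.ceil_pos.2 (hN ℓ), ?_, ?_⟩
  · calc ∑ ℓ ∈ range n, v ℓ / ⌈2 * n * v ℓ / ε ^ 2⌉₊
        ≤ ∑ ℓ ∈ range n, v ℓ / (2 * n * v ℓ / ε ^ 2) := by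
          gcongr with ℓ
          · exact (hv ℓ).le
          · exact hN ℓ
          · exact Nat.le_ceil _
      _ = ∑ _ℓ ∈ range n, ε ^ 2 / (2 * n) :=
          sum_congr rfl fun ℓ _ => by field_simp [(hv ℓ).ne']
      _ = ε ^ 2 / 2 := by
          rw [sum_const, card_range, nsmul_eq_mul]
          field_simp
  · calc ∑ ℓ ∈ range n, ⌈2 * n * v ℓ / ε ^ 2⌉₊ * w ℓ
        ≤ ∑ ℓ ∈ range n, (2 * n * v ℓ / ε ^ 2 + 1) * w ℓ := by
          gcongr with ℓ
          · exact hw ℓ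
          · exact (Nat.ceil_lt_add_one (hN ℓ).le).le
      _ ≤ ∑ _ℓ ∈ range n, (2 * n * κ / ε ^ 2 + W) :=
          sum_le_sum fun ℓ hℓ => by
            rw [add_mul, one_mul, mul_div_right_comm, mul_assoc, hvw, ← mul_div_right_comm]
            gcongr
            exact hW ℓ (mem_range.1 hℓ)
      _ = n * (2 * n * κ / ε ^ 2 + W) := by rw [sum_const, card_range, nsmul_eq_mul]

theorem mul_two_mul_add_le_sq_mul {x y a b : ℝ} (hx : 1 ≤ x) (hxy : x ≤ y) (ha : 0 ≤ a)
    (hb : 0 ≤ b) : x * (2 * x * a + b) ≤ y ^ 2 * (2 * a + b) := by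
  have hsq : x * x ≤ y * y := mul_le_mul hxy hxy (by linarith) (by linarith)
  have hlin : x ≤ y * y := by nlinarith
  nlinarith [mul_le_mul_of_nonneg_left hsq ha, mul_le_mul_of_nonneg_left hlin hb]

theorem mlmc_complexity_beta_eq_gamma_general
    (k₁ k₂ : ℝ) (hk₁ : 1 < k₁)
    (h : ℕ → ℝ) (hpos : ∀ ℓ, 0 < h ℓ)
    (hlow : ∀ ℓ : ℕ, k₁ ≤ h ℓ / h (ℓ + 1))
    (hhigh : ∀ ℓ : ℕ, h ℓ / h (ℓ + 1) ≤ k₂)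
    (α β γ c₁ c₂ c₃ : ℝ)
    (hα : 0 < α) (hβ : 0 < β)
    (hc₁ : 0 < c₁) (hc₂ : 0 < c₂) (hc₃ : 0 < c₃)
    (hαβγ : α ≥ (1 / 2) * min β γ) (hβγ : β = γ) :
    ∃ C : ℝ, 0 < C ∧ ∀ ε : ℝ, 0 < ε → ε < Real.exp (-1) →
      ∃ (L : ℕ) (N : ℕ → ℕ), (∀ ℓ ≤ L, 0 < N ℓ) ∧
        (∑ ℓ ∈ Finset.range (L + 1), c₂ * h ℓ ^ β / (N ℓ : ℝ)) + (c₁ * h L ^ α) ^ 2 ≤ ε ^ 2 ∧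
        (∑ ℓ ∈ Finset.range (L + 1), (N ℓ : ℝ) * (c₃ * h ℓ ^ (-γ))) ≤ C * ε ^ (-2 : ℝ) * Real.log ε ^ 2 := by
  subst hβγ
  rw [min_self] at hαβγ
  obtain ⟨A, E, hA, hE, hlevel⟩ := exists_mlmc_level hpos hk₁ hlow hhigh hα hβ.le (by linarith) hc₁
  refine ⟨A ^ 2 * (2 * (c₂ * c₃) + c₃ * E), by positivity, fun ε hε hεe => ?_⟩
  obtain ⟨L, hbias, hL, hfine⟩ := hlevel ε hε hεe
  have hvw : ∀ ℓ, c₂ * h ℓ ^ β * (c₃ * h ℓ ^ (-β)) = c₂ * c₃ := fun ℓ => by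
    rw [mul_mul_mul_comm, ← rpow_add (hpos ℓ), add_neg_cancel, rpow_zero, mul_one]
  obtain ⟨N, hNpos, hvar, hcost⟩ := exists_mlmc_samples L.succ_pos
    (fun ℓ => by have := hpos ℓ; positivity) (fun ℓ => by have := hpos ℓ; positivity) hvw
    (fun ℓ hℓ => mul_le_mul_of_nonneg_left (hfine ℓ (Nat.lt_succ_iff.1 hℓ)) hc₃.le) hε
  refine ⟨L, N, fun ℓ _ => hNpos ℓ, by linarith, hcost.trans ?_⟩
  calc ((L + 1 : ℕ) : ℝ) * (2 * (L + 1 : ℕ) * (c₂ * c₃) / ε ^ 2 + c₃ * (E / ε ^ 2))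
      = (L + 1) * (2 * (L + 1) * (c₂ * c₃) + c₃ * E) / ε ^ 2 := by push_cast; ring
    _ ≤ (A * -log ε) ^ 2 * (2 * (c₂ * c₃) + c₃ * E) / ε ^ 2 :=
        div_le_div_of_nonneg_right
          (mul_two_mul_add_le_sq_mul (by simp) hL (by positivity) (by positivity)) (by positivity)
    _ = _ := by rw [rpow_neg hε.le, rpow_two]; ring

/-- Abstract multilevel Monte Carlo complexity theorem, case β = γ. -/
theorem mlmc_complexity_beta_eq_gamma
    (k₁ k₂ : ℝ) (hk₁ : 1 < k₁) (hk₁₂ : k₁ ≤ k₂)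
    (h : ℕ → ℝ) (hpos : ∀ ℓ, 0 < h ℓ) (hh0 : h 0 ≤ 1)
    (hlow : ∀ ℓ : ℕ, k₁ ≤ h ℓ / h (ℓ + 1))
    (hhigh : ∀ ℓ : ℕ, h ℓ / h (ℓ + 1) ≤ k₂)
    (α β γ c₁ c₂ c₃ : ℝ)
    (hα : 0 < α) (hβ : 0 < β) (hγ : 0 < γ)
    (hc₁ : 0 < c₁) (hc₂ : 0 < c₂) (hc₃ : 0 < c₃)
    (hαβγ : α ≥ (1 / 2) * min β γ) (hβγ : β = γ) :
    ∃ C : ℝ, 0 < C ∧ ∀ ε : ℝ, 0 < ε → ε < Real.exp (-1) →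
      ∃ (L : ℕ) (N : ℕ → ℕ), (∀ ℓ ≤ L, 0 < N ℓ) ∧
        (∑ ℓ ∈ Finset.range (L + 1), c₂ * h ℓ ^ β / (N ℓ : ℝ)) + (c₁ * h L ^ α) ^ 2 ≤ ε ^ 2 ∧
        (∑ ℓ ∈ Finset.range (L + 1), (N ℓ : ℝ) * (c₃ * h ℓ ^ (-γ))) ≤ C * ε ^ (-2 : ℝ) * Real.log ε ^ 2 :=
  mlmc_complexity_beta_eq_gamma_general k₁ k₂ hk₁ h hpos hlow hhigh α β γ c₁ c₂ c₃ hα hβ hc₁ hc₂ hc₃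
    hαβγ hβγ
end

section
/- Let 1 < k₁ ≤ k₂ < ∞ and let (h_ℓ)_{ℓ≥0} be a sequence of positive reals with h₀ ≤ 1 and k₁ ≤ h_{ℓ-1}/h_ℓ ≤ k₂ for all ℓ ≥ 1. Let α, β, γ, c₁, c₂, c₃ > 0 satisfy α ≥ ½·min(β,γ) and β < γ. Then there exists a constant C > 0, depending only on α, β, γ, c₁, c₂, c₃, k₁, k₂ and h₀, such that for every ε with 0 < ε < e^{-1} there exist a level L ∈ ℕ and positive integers N₀, …, N_L with: (i) ∑_{ℓ=0}^{L} c₂ h_ℓ^β / N_ℓ + (c₁ h_L^α)² ≤ ε², and (ii) ∑_{ℓ=0}^{L} N_ℓ · c₃ h_ℓ^{-γ} ≤ C ε^{-2-(γ-β)/α}. -/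
/-!
Take for `L` the first level whose bias `c₁ h_L ^ α` is at most `ε / 2`; since consecutive
mesh sizes differ by at most the factor `k₂`, this forces `h_L ≳ ε ^ (1 / α)`. On the levels
`0, …, L` the Lagrange-optimal sample numbers `N_ℓ = ⌈2 ε⁻² S √(V_ℓ / C_ℓ)⌉`, with
`S = ∑ √(V_ℓ C_ℓ)`, keep the variance below `ε² / 2` at cost `2 ε⁻² S² + ∑ C_ℓ`. As `β < γ`,
the terms `√(V_ℓ C_ℓ) ∝ h_ℓ ^ ((β - γ) / 2)` grow geometrically in `ℓ`, so `S` is dominated by its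
last term and `S² ≲ ε ^ ((β - γ) / α)`; likewise `∑ C_ℓ ≲ ε ^ (-γ / α)`, which is no larger
because `β ≤ 2 α`.
-/

open Finset Real

theorem sum_range_le_div_one_sub_of_le_mul_succ {a : ℕ → ℝ} {q : ℝ} (ha : ∀ n, 0 ≤ a n)
    (hq₀ : 0 ≤ q) (hq₁ : q < 1) (hgrowth : ∀ n, a n ≤ q * a (n + 1)) (L : ℕ) :
    ∑ n ∈ range (L + 1), a n ≤ a L / (1 - q) := by
  have hq : 0 < 1 - q := by linarith
  induction L with
  | zero => simpa using le_div_self (ha 0) hq (by linarith)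
  | succ L ih =>
    rw [sum_range_succ]
    calc ∑ n ∈ range (L + 1), a n + a (L + 1) ≤ q * a (L + 1) / (1 - q) + a (L + 1) := by
          gcongr; exact ih.trans (div_le_div_of_nonneg_right (hgrowth L) hq.le)
      _ = a (L + 1) / (1 - q) := by field_simp; ring

section Decay

variable {k : ℝ} {h : ℕ → ℝ}

theorem sum_range_rpow_le_of_mul_le (hk : 1 < k) (hpos : ∀ n, 0 < h n)
    (hdecay : ∀ n, k * h (n + 1) ≤ h n) {u x : ℝ} (hu : u < 0) (hx : 0 < x) {L : ℕ}
    (hxL : x ≤ h L) :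
    ∑ n ∈ range (L + 1), h n ^ u ≤ x ^ u / (1 - k ^ u) := by
  have hk₀ : 0 < k := by linarith
  have hgrowth : ∀ n, h n ^ u ≤ k ^ u * h (n + 1) ^ u := fun n => by
    rw [← mul_rpow hk₀.le (hpos _).le]
    exact rpow_le_rpow_of_nonpos (by have := hpos (n + 1); positivity) (hdecay n) hu.le
  calc ∑ n ∈ range (L + 1), h n ^ u ≤ h L ^ u / (1 - k ^ u) :=
        sum_range_le_div_one_sub_of_le_mul_succ (fun n => (rpow_pos_of_pos (hpos n) u).le)
          (rpow_pos_of_pos hk₀ u).le (rpow_lt_one_of_one_lt_of_neg hk hu) hgrowth L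
    _ ≤ x ^ u / (1 - k ^ u) := by
        have := rpow_lt_one_of_one_lt_of_neg hk hu
        exact div_le_div_of_nonneg_right (rpow_le_rpow_of_nonpos hx hxL hu.le) (by linarith)

theorem exists_le_of_mul_le (hk : 1 < k) (hdecay : ∀ n, k * h (n + 1) ≤ h n) {T : ℝ}
    (hT : 0 < T) : ∃ n, h n ≤ T := by
  have hchain : ∀ n, h n * k ^ n ≤ h 0 := fun n => by
    induction n with
    | zero => simp
    | succ n ih =>
      calc h (n + 1) * k ^ (n + 1) = k * h (n + 1) * k ^ n := by ring
        _ ≤ h n * k ^ n := by gcongr; exact hdecay n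
        _ ≤ h 0 := ih
  obtain ⟨n, hn⟩ := pow_unbounded_of_one_lt (h 0 / T) hk
  exact ⟨n, le_of_mul_le_mul_right ((hchain n).trans ((div_lt_iff₀' hT).1 hn).le)
    (pow_pos (by linarith) n)⟩

theorem exists_le_and_min_div_le (hk : 1 < k) {k' : ℝ} (hk' : 0 < k')
    (hdecay : ∀ n, k * h (n + 1) ≤ h n) (hgrowth : ∀ n, h n ≤ k' * h (n + 1))
    {T : ℝ} (hT : 0 < T) : ∃ L, h L ≤ T ∧ min (h 0) (T / k') ≤ h L := by
  classical
  have hex := exists_le_of_mul_le hk hdecay hT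
  refine ⟨Nat.find hex, Nat.find_spec hex, ?_⟩
  rcases hL : Nat.find hex with _ | m
  · exact min_le_left _ _
  · have hTm : T < h m := not_le.1 (Nat.find_min hex (by omega))
    exact (min_le_right _ _).trans ((div_le_iff₀' hk').2 (hTm.le.trans (hgrowth m)))

theorem exists_level_bias_le (hk : 1 < k) {k' : ℝ} (hk' : 0 < k') (hpos : ∀ n, 0 < h n)
    (hdecay : ∀ n, k * h (n + 1) ≤ h n) (hgrowth : ∀ n, h n ≤ k' * h (n + 1))
    {c α ε : ℝ} (hc : 0 < c) (hα : 0 < α) (hε : 0 < ε) (hε₁ : ε ≤ 1) :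
    ∃ L, c * h L ^ α ≤ ε / 2 ∧ ∀ u < 0, ∑ n ∈ range (L + 1), h n ^ u ≤
      min (h 0) ((2 * c)⁻¹ ^ α⁻¹ / k') ^ u / (1 - k ^ u) * ε ^ (u / α) := by
  set b := (2 * c)⁻¹ ^ α⁻¹
  set m := min (h 0) (b / k')
  have hb : 0 < b := by positivity
  have hm : 0 < m := lt_min (hpos 0) (by positivity)
  have hεα : 0 < ε ^ α⁻¹ := by positivity
  obtain ⟨L, hLT, hTL⟩ :=
    exists_le_and_min_div_le hk hk' hdecay hgrowth (mul_pos hεα hb)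
  have hmL : m * ε ^ α⁻¹ ≤ h L := by
    refine le_trans (le_min ?_ ?_) hTL
    · exact (mul_le_of_le_one_right hm.le (rpow_le_one hε.le hε₁ (by positivity))).trans
        (min_le_left _ _)
    · rw [mul_comm, mul_div_assoc]
      exact mul_le_mul_of_nonneg_left (min_le_right _ _) hεα.le
  refine ⟨L, ?_, fun u hu => ?_⟩
  · calc c * h L ^ α ≤ c * (ε ^ α⁻¹ * b) ^ α := by have := hpos L; gcongr
      _ = ε / 2 := by
        rw [mul_rpow hεα.le hb.le, rpow_inv_rpow hε.le hα.ne',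
          rpow_inv_rpow (by positivity) hα.ne']
        field_simp
  · refine (sum_range_rpow_le_of_mul_le hk hpos hdecay hu (mul_pos hm hεα) hmL).trans_eq ?_
    rw [mul_rpow hm.le hεα.le, ← rpow_mul hε.le, inv_mul_eq_div]
    ring

end Decay

theorem sqrt_div_mul_self {x y : ℝ} (hy : 0 < y) : √(x / y) * y = √(x * y) := by
  rw [← sqrt_sq hy.le, ← sqrt_mul' _ (sq_nonneg _), sqrt_sq hy.le]
  congr 1; field_simp

theorem div_sqrt_div {x y : ℝ} (hx : 0 < x) (hy : 0 < y) : x / √(x / y) = √(x * y) := by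
  rw [div_eq_iff (by positivity), ← sqrt_mul (by positivity)]
  rw [show x * y * (x / y) = x ^ 2 by field_simp, sqrt_sq hx.le]

theorem exists_sample_sizes {ι : Type*} (s : Finset ι) (V C : ι → ℝ)
    (hV : ∀ i ∈ s, 0 < V i) (hC : ∀ i ∈ s, 0 < C i) {v : ℝ} (hv : 0 < v) :
    ∃ N : ι → ℕ, (∀ i ∈ s, 0 < N i) ∧ ∑ i ∈ s, V i / N i ≤ v ∧
      ∑ i ∈ s, (N i : ℝ) * C i ≤ (∑ i ∈ s, √(V i * C i)) ^ 2 / v + ∑ i ∈ s, C i := by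
  set S := ∑ i ∈ s, √(V i * C i)
  have hS : ∀ i ∈ s, 0 < S := fun i hi =>
    (sqrt_pos.2 (mul_pos (hV i hi) (hC i hi))).trans_le
      (single_le_sum (f := fun j => √(V j * C j)) (fun j _ => sqrt_nonneg _) hi)
  have hN : ∀ i ∈ s, 0 < S * √(V i / C i) / v := fun i hi => by
    have := hS i hi; have := hV i hi; have := hC i hi; positivity
  refine ⟨fun i => ⌈S * √(V i / C i) / v⌉₊, fun i hi => Nat.ceil_pos.2 (hN i hi), ?_, ?_⟩
  · calc ∑ i ∈ s, V i / ⌈S * √(V i / C i) / v⌉₊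
        ≤ ∑ i ∈ s, v * √(V i * C i) / S := sum_le_sum fun i hi => by
          calc V i / ⌈S * √(V i / C i) / v⌉₊ ≤ V i / (S * √(V i / C i) / v) :=
                div_le_div_of_nonneg_left (hV i hi).le (hN i hi) (Nat.le_ceil _)
            _ = v * (V i / √(V i / C i)) / S := by
                have := hS i hi; have := hN i hi; field_simp
            _ = v * √(V i * C i) / S := by rw [div_sqrt_div (hV i hi) (hC i hi)]
      _ = v * (S / S) := by rw [← sum_div, ← mul_sum, mul_div_assoc]
      _ ≤ v := mul_le_of_le_one_right hv.le (div_self_le_one S)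
  · calc ∑ i ∈ s, (⌈S * √(V i / C i) / v⌉₊ : ℝ) * C i
        ≤ ∑ i ∈ s, (S * √(V i * C i) / v + C i) := sum_le_sum fun i hi => by
          calc (⌈S * √(V i / C i) / v⌉₊ : ℝ) * C i ≤ (S * √(V i / C i) / v + 1) * C i :=
                mul_le_mul_of_nonneg_right (Nat.ceil_lt_add_one (hN i hi).le).le (hC i hi).le
            _ = S * (√(V i / C i) * C i) / v + C i := by ring
            _ = S * √(V i * C i) / v + C i := by rw [sqrt_div_mul_self (hC i hi)]
      _ = S ^ 2 / v + ∑ i ∈ s, C i := by rw [sum_add_distrib, ← sum_div, ← mul_sum, sq]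

theorem sqrt_mul_rpow_mul_mul_rpow_neg {a b x : ℝ} (ha : 0 ≤ a) (hb : 0 ≤ b) (hx : 0 < x)
    (p q : ℝ) : √(a * x ^ p * (b * x ^ (-q))) = √(a * b) * x ^ ((p - q) / 2) := by
  have hsq : x ^ p * x ^ (-q) = (x ^ ((p - q) / 2)) ^ 2 := by
    rw [sq, ← rpow_add hx, ← rpow_add hx]; ring_nf
  rw [show a * x ^ p * (b * x ^ (-q)) = a * b * (x ^ ((p - q) / 2)) ^ 2 by rw [← hsq]; ring,
    sqrt_mul (mul_nonneg ha hb), sqrt_sq (rpow_pos_of_pos hx _).le]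

theorem sum_sqrt_sq_div_add_sum_le {ι : Type*} (t : Finset ι) {h : ι → ℝ} (hpos : ∀ i, 0 < h i)
    {α β γ c₂ c₃ A A' ε : ℝ} (hα : 0 < α) (hβα : β ≤ 2 * α) (hc₂ : 0 ≤ c₂) (hc₃ : 0 ≤ c₃)
    (hA' : 0 ≤ A') (hε : 0 < ε) (hε₁ : ε ≤ 1)
    (hG : ∑ i ∈ t, h i ^ ((β - γ) / 2) ≤ A * ε ^ ((β - γ) / 2 / α))
    (hG' : ∑ i ∈ t, h i ^ (-γ) ≤ A' * ε ^ (-γ / α)) :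
    (∑ i ∈ t, √(c₂ * h i ^ β * (c₃ * h i ^ (-γ)))) ^ 2 / (ε ^ 2 / 2)
        + ∑ i ∈ t, c₃ * h i ^ (-γ) ≤
      (2 * c₂ * c₃ * A ^ 2 + c₃ * A') * ε ^ (-2 - (γ - β) / α) := by
  have hE : (ε ^ ((β - γ) / 2 / α)) ^ 2 / ε ^ 2 = ε ^ (-2 - (γ - β) / α) := by
    rw [show -2 - (γ - β) / α = (β - γ) / 2 / α * (2 : ℕ) - 2 by field_simp; ring, rpow_sub hε,
      rpow_mul_natCast hε.le, rpow_two]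
  have hγE : ε ^ (-γ / α) ≤ ε ^ (-2 - (γ - β) / α) := by
    refine rpow_le_rpow_of_exponent_ge hε hε₁ ?_
    have : β / α ≤ 2 := (div_le_iff₀ hα).2 hβα
    rw [neg_div, sub_div]; linarith
  have hG₀ : 0 ≤ ∑ i ∈ t, h i ^ ((β - γ) / 2) :=
    sum_nonneg fun i _ => (rpow_pos_of_pos (hpos i) _).le
  simp only [sqrt_mul_rpow_mul_mul_rpow_neg hc₂ hc₃ (hpos _), ← mul_sum]
  calc (√(c₂ * c₃) * ∑ i ∈ t, h i ^ ((β - γ) / 2)) ^ 2 / (ε ^ 2 / 2)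
        + c₃ * ∑ i ∈ t, h i ^ (-γ)
      = 2 * c₂ * c₃ * (∑ i ∈ t, h i ^ ((β - γ) / 2)) ^ 2 / ε ^ 2
        + c₃ * ∑ i ∈ t, h i ^ (-γ) := by
        rw [mul_pow, sq_sqrt (mul_nonneg hc₂ hc₃)]; field_simp
    _ ≤ 2 * c₂ * c₃ * (A * ε ^ ((β - γ) / 2 / α)) ^ 2 / ε ^ 2 + c₃ * (A' * ε ^ (-γ / α)) := by
        gcongr
    _ = 2 * c₂ * c₃ * A ^ 2 * ε ^ (-2 - (γ - β) / α) + c₃ * A' * ε ^ (-γ / α) := by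
        rw [← hE]; ring
    _ ≤ (2 * c₂ * c₃ * A ^ 2 + c₃ * A') * ε ^ (-2 - (γ - β) / α) := by
        rw [add_mul]; gcongr

theorem mlmc_complexity_beta_lt_gamma_general
    (k₁ k₂ : ℝ) (hk₁ : 1 < k₁) (hk₁₂ : k₁ ≤ k₂)
    (h : ℕ → ℝ) (hpos : ∀ ℓ, 0 < h ℓ)
    (hlow : ∀ ℓ : ℕ, k₁ ≤ h ℓ / h (ℓ + 1))
    (hhigh : ∀ ℓ : ℕ, h ℓ / h (ℓ + 1) ≤ k₂)
    (α β γ c₁ c₂ c₃ : ℝ)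
    (hα : 0 < α) (hγ : 0 < γ)
    (hc₁ : 0 < c₁) (hc₂ : 0 < c₂) (hc₃ : 0 < c₃)
    (hαβγ : α ≥ (1 / 2) * min β γ) (hβγ : β < γ) :
    ∃ C : ℝ, 0 < C ∧ ∀ ε : ℝ, 0 < ε → ε < Real.exp (-1) →
      ∃ (L : ℕ) (N : ℕ → ℕ), (∀ ℓ ≤ L, 0 < N ℓ) ∧
        (∑ ℓ ∈ Finset.range (L + 1), c₂ * h ℓ ^ β / (N ℓ : ℝ)) + (c₁ * h L ^ α) ^ 2 ≤ ε ^ 2 ∧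
        (∑ ℓ ∈ Finset.range (L + 1), (N ℓ : ℝ) * (c₃ * h ℓ ^ (-γ))) ≤ C * ε ^ (-2 - (γ - β) / α) := by
  have hdecay : ∀ ℓ, k₁ * h (ℓ + 1) ≤ h ℓ := fun ℓ => (le_div_iff₀ (hpos _)).1 (hlow ℓ)
  have hgrowth : ∀ ℓ, h ℓ ≤ k₂ * h (ℓ + 1) := fun ℓ => (div_le_iff₀ (hpos _)).1 (hhigh ℓ)
  have hk₂ : 0 < k₂ := by linarith
  set s := (β - γ) / 2
  set m := min (h 0) ((2 * c₁)⁻¹ ^ α⁻¹ / k₂)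
  set A := m ^ s / (1 - k₁ ^ s)
  set A' := m ^ (-γ) / (1 - k₁ ^ (-γ))
  have hs : s < 0 := div_neg_of_neg_of_pos (by linarith) two_pos
  have hm : 0 < m := lt_min (hpos 0) (by positivity)
  have hA : 0 < A := div_pos (by positivity)
    (by linarith [rpow_lt_one_of_one_lt_of_neg hk₁ hs])
  have hA' : 0 < A' := div_pos (by positivity)
    (by linarith [rpow_lt_one_of_one_lt_of_neg hk₁ (neg_lt_zero.2 hγ)])
  refine ⟨2 * c₂ * c₃ * A ^ 2 + c₃ * A', by positivity, fun ε hε hεe => ?_⟩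
  have hε₁ : ε < 1 := hεe.trans (exp_lt_one_iff.2 (by norm_num))
  obtain ⟨L, hbias, hsum⟩ :=
    exists_level_bias_le hk₁ hk₂ hpos hdecay hgrowth hc₁ hα hε hε₁.le
  obtain ⟨N, hN, hvar, hcost⟩ := exists_sample_sizes (range (L + 1))
    (fun ℓ => c₂ * h ℓ ^ β) (fun ℓ => c₃ * h ℓ ^ (-γ))
    (fun ℓ _ => by have := hpos ℓ; positivity) (fun ℓ _ => by have := hpos ℓ; positivity)
    (v := ε ^ 2 / 2) (by positivity)
  refine ⟨L, N, fun ℓ hℓ => hN ℓ (mem_range_succ_iff.2 hℓ), ?_, hcost.trans ?_⟩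
  · have : (c₁ * h L ^ α) ^ 2 ≤ (ε / 2) ^ 2 :=
      pow_le_pow_left₀ (by have := hpos L; positivity) hbias 2
    linarith [show (ε / 2) ^ 2 = ε ^ 2 / 4 by ring, sq_nonneg ε]
  · rw [min_eq_left hβγ.le] at hαβγ
    exact sum_sqrt_sq_div_add_sum_le _ hpos hα (by linarith) hc₂.le hc₃.le hA'.le hε hε₁.le
      (hsum s hs) (hsum (-γ) (neg_lt_zero.2 hγ))

/-- Abstract multilevel Monte Carlo complexity theorem, case β < γ. -/
theorem mlmc_complexity_beta_lt_gamma
    (k₁ k₂ : ℝ) (hk₁ : 1 < k₁) (hk₁₂ : k₁ ≤ k₂)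
    (h : ℕ → ℝ) (hpos : ∀ ℓ, 0 < h ℓ) (hh0 : h 0 ≤ 1)
    (hlow : ∀ ℓ : ℕ, k₁ ≤ h ℓ / h (ℓ + 1))
    (hhigh : ∀ ℓ : ℕ, h ℓ / h (ℓ + 1) ≤ k₂)
    (α β γ c₁ c₂ c₃ : ℝ)
    (hα : 0 < α) (hβ : 0 < β) (hγ : 0 < γ)
    (hc₁ : 0 < c₁) (hc₂ : 0 < c₂) (hc₃ : 0 < c₃)
    (hαβγ : α ≥ (1 / 2) * min β γ) (hβγ : β < γ) :
    ∃ C : ℝ, 0 < C ∧ ∀ ε : ℝ, 0 < ε → ε < Real.exp (-1) →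
      ∃ (L : ℕ) (N : ℕ → ℕ), (∀ ℓ ≤ L, 0 < N ℓ) ∧
        (∑ ℓ ∈ Finset.range (L + 1), c₂ * h ℓ ^ β / (N ℓ : ℝ)) + (c₁ * h L ^ α) ^ 2 ≤ ε ^ 2 ∧
        (∑ ℓ ∈ Finset.range (L + 1), (N ℓ : ℝ) * (c₃ * h ℓ ^ (-γ))) ≤ C * ε ^ (-2 - (γ - β) / α) :=
  mlmc_complexity_beta_lt_gamma_general k₁ k₂ hk₁ hk₁₂ h hpos hlow hhigh α β γ c₁ c₂ c₃ hα hγ hc₁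
    hc₂ hc₃ hαβγ hβγ
end

section
/- Let V be a real inner product space, let B : V × V → ℝ be a bilinear map, and let C_B ≥ 0 satisfy |B(v, w)| ≤ C_B ‖v‖ ‖w‖ for all v, w ∈ V. Let S ⊆ V be a subspace, let M : V → ℝ be continuously Fréchet differentiable, and let u, u_h, z ∈ V and z_h ∈ S satisfy: (i) Galerkin orthogonality B(u − u_h, v) = 0 for all v ∈ S, and (ii) the dual problem B(v, z) = ∫₀¹ DM(u + θ(u_h − u))(v) dθ for all v ∈ V, where DM(w) denotes the Fréchet derivative of M at w. Then |M(u) − M(u_h)| ≤ C_B ‖u − u_h‖ ‖z − z_h‖. -/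
open intervalIntegral in
theorem ContDiff.sub_eq_integral_fderiv_segment {E F : Type*}
    [NormedAddCommGroup E] [NormedSpace ℝ E]
    [NormedAddCommGroup F] [NormedSpace ℝ F] [CompleteSpace F]
    {f : E → F} (hf : ContDiff ℝ 1 f) (x y : E) :
    f x - f y = ∫ θ in (0:ℝ)..1, fderiv ℝ f (x + θ • (y - x)) (x - y) := by
  set γ : ℝ → E := fun θ => x + θ • (y - x)
  have hγ : ∀ θ, HasDerivAt γ (y - x) θ := fun θ => by
    simpa only [one_smul] using ((hasDerivAt_id' θ).smul_const (y - x)).const_add x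
  have hderiv : ∀ θ ∈ Set.uIcc (0:ℝ) 1,
      HasDerivAt (f ∘ γ) (-fderiv ℝ f (γ θ) (x - y)) θ := fun θ _ => by
    rw [← map_neg, neg_sub]
    exact ((hf.differentiable one_ne_zero _).hasFDerivAt).comp_hasDerivAt θ (hγ θ)
  have hcont : Continuous fun θ => fderiv ℝ f (γ θ) (x - y) :=
    ((hf.continuous_fderiv one_ne_zero).comp (continuous_iff_continuousAt.2
      fun θ => (hγ θ).continuousAt)).clm_apply continuous_const
  have hFTC := integral_eq_sub_of_hasDerivAt hderiv (hcont.neg.intervalIntegrable 0 1)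
  simp only [integral_neg, Function.comp_apply, γ, zero_smul, add_zero, one_smul,
    add_sub_cancel] at hFTC
  rw [← neg_sub, ← hFTC, neg_neg]

theorem abs_apply_le_mul_norm_sub_of_orthogonal {E F : Type*}
    [SeminormedAddCommGroup E] [Module ℝ E] [SeminormedAddCommGroup F] [Module ℝ F]
    (B : E →ₗ[ℝ] F →ₗ[ℝ] ℝ) {C : ℝ} (hB : ∀ v w, |B v w| ≤ C * ‖v‖ * ‖w‖)
    {S : Submodule ℝ F} {e : E} (he : ∀ v ∈ S, B e v = 0) (z : F) {z_h : F}
    (hz_h : z_h ∈ S) :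
    |B e z| ≤ C * ‖e‖ * ‖z - z_h‖ := by
  rw [← sub_zero (B e z), ← he z_h hz_h, ← map_sub]
  exact hB e (z - z_h)

theorem duality_bound_frechet_functional_general
    {V : Type*} [NormedAddCommGroup V] [InnerProductSpace ℝ V]
    (B : V →ₗ[ℝ] V →ₗ[ℝ] ℝ) (C_B : ℝ)
    (hB : ∀ v w : V, |B v w| ≤ C_B * ‖v‖ * ‖w‖)
    (S : Submodule ℝ V) (M : V → ℝ) (hM : ContDiff ℝ 1 M)
    (u u_h z z_h : V) (hz_h : z_h ∈ S)
    (hGal : ∀ v ∈ S, B (u - u_h) v = 0)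
    (hdual : ∀ v : V, B v z = ∫ θ in (0:ℝ)..1, fderiv ℝ M (u + θ • (u_h - u)) v) :
    |M u - M u_h| ≤ C_B * ‖u - u_h‖ * ‖z - z_h‖ := by
  rw [hM.sub_eq_integral_fderiv_segment, ← hdual]
  exact abs_apply_le_mul_norm_sub_of_orthogonal B hB hGal z hz_h

/-- Abstract duality bound for a continuously Fréchet differentiable (possibly
nonlinear) output functional of a Galerkin approximation, where the dual problem
has the averaged derivative of `M` along the segment from `u` to `u_h` as
right-hand side. -/
theorem duality_bound_frechet_functional
    {V : Type*} [NormedAddCommGroup V] [InnerProductSpace ℝ V]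
    (B : V →ₗ[ℝ] V →ₗ[ℝ] ℝ) (C_B : ℝ) (hC : 0 ≤ C_B)
    (hB : ∀ v w : V, |B v w| ≤ C_B * ‖v‖ * ‖w‖)
    (S : Submodule ℝ V) (M : V → ℝ) (hM : ContDiff ℝ 1 M)
    (u u_h z z_h : V) (hz_h : z_h ∈ S)
    (hGal : ∀ v ∈ S, B (u - u_h) v = 0)
    (hdual : ∀ v : V, B v z = ∫ θ in (0:ℝ)..1, fderiv ℝ M (u + θ • (u_h - u)) v) :
    |M u - M u_h| ≤ C_B * ‖u - u_h‖ * ‖z - z_h‖ :=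
  duality_bound_frechet_functional_general B C_B hB S M hM u u_h z z_h hz_h hGal hdual
end

section
/- Let V be a real inner product space, let B : V × V → ℝ be a bilinear map, and let C_B ≥ 0 satisfy |B(v, w)| ≤ C_B ‖v‖ ‖w‖ for all v, w ∈ V. Let S_H ⊆ S_h ⊆ V be subspaces, let M : V → ℝ be linear, and let u, z ∈ V, u_h, z_h ∈ S_h, u_H, z_H ∈ S_H satisfy: (i) B(u − u_h, v) = 0 for all v ∈ S_h and B(u − u_H, v) = 0 for all v ∈ S_H (primal Galerkin orthogonality on the two levels); (ii) B(v, z) = M(v) for all v ∈ V (dual problem); (iii) B(v, z − z_h) = 0 for all v ∈ S_h (dual Galerkin orthogonality on the fine level). Then |M(u_h) − M(u_H)| ≤ C_B ‖u_h − u_H‖ ‖z_h − z_H‖. -/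
/-- Abstract two-level duality bound for the difference of a bounded linear output
functional between Galerkin approximations on two nested subspaces. -/
theorem duality_bound_two_level
    {V : Type*} [NormedAddCommGroup V] [InnerProductSpace ℝ V]
    (B : V →ₗ[ℝ] V →ₗ[ℝ] ℝ) (C_B : ℝ) (hC : 0 ≤ C_B)
    (hB : ∀ v w : V, |B v w| ≤ C_B * ‖v‖ * ‖w‖)
    (S_H S_h : Submodule ℝ V) (hSS : S_H ≤ S_h) (M : V →ₗ[ℝ] ℝ)
    (u z : V) (u_h z_h : V) (hu_h : u_h ∈ S_h) (hz_hS : z_h ∈ S_h)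
    (u_H z_H : V) (hu_H : u_H ∈ S_H) (hz_HS : z_H ∈ S_H)
    (hGal_h : ∀ v ∈ S_h, B (u - u_h) v = 0)
    (hGal_H : ∀ v ∈ S_H, B (u - u_H) v = 0)
    (hdual : ∀ v : V, B v z = M v)
    (hdualGal_h : ∀ v ∈ S_h, B v (z - z_h) = 0) :
    |M u_h - M u_H| ≤ C_B * ‖u_h - u_H‖ * ‖z_h - z_H‖ := by
  have key : M u_h - M u_H = B (u_h - u_H) (z_h - z_H) := by
    have h1 : B (u - u_h) z_H = 0 := hGal_h z_H (hSS hz_HS)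
    have h2 : B (u - u_H) z_H = 0 := hGal_H z_H hz_HS
    have h3 : B (u_h - u_H) (z - z_h) = 0 :=
      hdualGal_h _ (S_h.sub_mem hu_h (hSS hu_H))
    have h4 : B (u_h - u_H) z = M u_h - M u_H := by
      rw [map_sub]; simp [hdual]
    have h5 : B (u_h - u_H) z_H = 0 := by
      have : u_h - u_H = (u - u_H) - (u - u_h) := by abel
      rw [this, map_sub, LinearMap.sub_apply, h2, h1, sub_zero]
    have h6 : B (u_h - u_H) (z_h - z_H) =
        B (u_h - u_H) z - B (u_h - u_H) (z - z_h) - B (u_h - u_H) z_H := by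
      simp only [map_sub]; ring
    rw [h6, h3, h5, h4]; ring
  rw [key]
  exact hB _ _
end

section
/- Let α, γ, c₁, c₃, v₀ > 0. Then there exists a constant C > 0, depending only on α, γ, c₁, c₃ and v₀, such that for every ε with 0 < ε < 1 there exist a real number h > 0 and a positive integer N with: (i) v₀/N + (c₁ h^α)² ≤ ε², and (ii) N · c₃ h^{-γ} ≤ C ε^{-2 - γ/α}. -/
/-- ε-cost of the standard single-level Monte Carlo estimator. -/
theorem monteCarlo_epsilon_cost
    (α γ c₁ c₃ v₀ : ℝ)
    (hα : 0 < α) (hγ : 0 < γ) (hc₁ : 0 < c₁) (hc₃ : 0 < c₃) (hv₀ : 0 < v₀) :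
    ∃ C : ℝ, 0 < C ∧ ∀ ε : ℝ, 0 < ε → ε < 1 →
      ∃ (h : ℝ) (N : ℕ), 0 < h ∧ 0 < N ∧
        v₀ / (N : ℝ) + (c₁ * h ^ α) ^ 2 ≤ ε ^ 2 ∧
        (N : ℝ) * (c₃ * h ^ (-γ)) ≤ C * ε ^ (-2 - γ / α) := by
  set a : ℝ := Real.sqrt 2 * c₁ with ha_def
  have ha : 0 < a := mul_pos (Real.sqrt_pos.mpr two_pos) hc₁
  refine ⟨(2 * v₀ + 1) * c₃ * a ^ (γ / α), by positivity, ?_⟩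
  intro ε hε hε1
  have hεa : 0 < ε / a := div_pos hε ha
  set N : ℕ := ⌈2 * v₀ / ε ^ 2⌉₊ with hN_def
  have hN : (2 * v₀ / ε ^ 2 : ℝ) ≤ N := Nat.le_ceil _
  have hNpos : (0 : ℝ) < N := lt_of_lt_of_le (by positivity) hN
  refine ⟨(ε / a) ^ α⁻¹, N, Real.rpow_pos_of_pos hεa _, ?_, ?_, ?_⟩
  · exact_mod_cast hNpos
  · have hpow : ((ε / a) ^ α⁻¹ : ℝ) ^ α = ε / a :=
      Real.rpow_inv_rpow hεa.le hα.ne'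
    rw [hpow]
    have h2v : 2 * v₀ ≤ (N : ℝ) * ε ^ 2 := (div_le_iff₀ (by positivity)).mp hN
    have h1 : v₀ / (N : ℝ) ≤ ε ^ 2 / 2 := by
      rw [div_le_div_iff₀ hNpos two_pos]; linarith
    have ha2 : a ^ 2 = 2 * c₁ ^ 2 := by
      rw [ha_def, mul_pow, Real.sq_sqrt (by norm_num : (0:ℝ) ≤ 2)]
    have h2 : (c₁ * (ε / a)) ^ 2 = ε ^ 2 / 2 := by
      field_simp
      nlinarith [sq_nonneg ε]
    rw [h2]; linarith
  · have hpow : ((ε / a) ^ α⁻¹ : ℝ) ^ (-γ) = a ^ (γ / α) * ε ^ (-(γ / α)) := by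
      rw [← Real.rpow_mul hεa.le,
        show α⁻¹ * (-γ) = -(γ / α) by field_simp,
        Real.rpow_neg hεa.le, Real.div_rpow hε.le ha.le, Real.rpow_neg hε.le]
      field_simp
    rw [hpow]
    have hsplit : ε ^ (-2 - γ / α) = (ε ^ 2)⁻¹ * ε ^ (-(γ / α)) := by
      rw [show (-2 - γ / α : ℝ) = (-2) + (-(γ / α)) by ring, Real.rpow_add hε,
        show ((-2 : ℝ)) = -((2 : ℕ) : ℝ) by norm_num,
        Real.rpow_neg hε.le, Real.rpow_natCast]
    have hNle : (N : ℝ) ≤ (2 * v₀ + 1) * (ε ^ 2)⁻¹ := by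
      have h1 : (N : ℝ) < 2 * v₀ / ε ^ 2 + 1 := Nat.ceil_lt_add_one (by positivity)
      have h2 : (1 : ℝ) ≤ (ε ^ 2)⁻¹ := by
        rw [le_inv_comm₀ one_pos (by positivity)]
        nlinarith
      have : 2 * v₀ / ε ^ 2 + 1 ≤ (2 * v₀ + 1) * (ε ^ 2)⁻¹ := by
        rw [div_eq_mul_inv]; nlinarith [hv₀.le]
      linarith
    calc (N : ℝ) * (c₃ * (a ^ (γ / α) * ε ^ (-(γ / α))))
        ≤ ((2 * v₀ + 1) * (ε ^ 2)⁻¹) * (c₃ * (a ^ (γ / α) * ε ^ (-(γ / α)))) := by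
          apply mul_le_mul_of_nonneg_right hNle
          positivity
      _ = (2 * v₀ + 1) * c₃ * a ^ (γ / α) * ε ^ (-2 - γ / α) := by
          rw [hsplit]; ring
end
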